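/- Let m ≥ 1 be an integer, let p be a prime, write k = ⌊p/(m+1)⌋ and l = p mod (m+1), and let j be an integer with 0 ≤ j ≤ k. Define ζ ∈ 𝔽_p[x,y] by ζ = ξ_{m+1}^p − Σ_{i=j+1}^{k} C(k,i)·(−1)^i·ξ_{m+1}^{k−i}·(x·(1 − y)·ξ_m)^i·(1 − x·y)^l·ξ_m^p, where ξ_m, ξ_{m+1} are viewed in 𝔽_p[x,y] via the coefficient ring map ℤ → 𝔽_p. Then ζ lies in the p·(m+1)-th power of the ideal of 𝔽_p[x,y] generated by (x − 1) and (y − 1), and the constant coefficient of ζ (the coefficient of the monomial x^0·y^0) equals 1; in particular it is nonzero. -/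

import Mathlib

/-!
Multiplying by `1 - x` gives `(1 - x) ξ_m = (1 - xy)^(m+1) - x^m (1 - y)^(m+1)`, hence the
two recursions
`ξ_{m+1} = x(1 - y) ξ_m + (1 - xy)^(m+1) = (1 - xy) ξ_m + x^m (1 - y)^(m+1)`.
The second puts `ξ_m` in `𝔪^m`, where `𝔪 = (x - 1, y - 1)`. By the first, the binomial sum over
all `0 ≤ i ≤ k` collapses to `(1 - xy)^((m+1)k + l) ξ_m^p = ((1 - xy) ξ_m)^p`, so by the
Frobenius `ζ = (x^m (1 - y)^(m+1))^p + Σ_{i ≤ j}(…)`, and every summand lies in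
`𝔪^((m+1)k + l + mp) = 𝔪^(p(m+1))`. As `x(1 - y)` vanishes at the origin, the constant term of
`ζ` is `ξ_{m+1}(0, 0)^p = 1`.
-/

open MvPolynomial Finset

/-- The polynomial `ξ_m ∈ ℤ[x,y]`, where `X 0` plays the role of `x` and `X 1` of `y`:
`ξ_m = (−1)^m x^m y^(m+1) + Σ_{j=0}^{m−1} Σ_{i=j}^{m−1} (−1)^j C(m+1,j) x^i y^j`. -/
noncomputable def xi (m : ℕ) : MvPolynomial (Fin 2) ℤ :=
  (-1) ^ m * X 0 ^ m * X 1 ^ (m + 1) +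
    ∑ j ∈ Finset.range m, ∑ i ∈ Finset.Icc j (m - 1),
      (-1) ^ j * ((m + 1).choose j : MvPolynomial (Fin 2) ℤ) * X 0 ^ i * X 1 ^ j

section Binomial

variable {S : Type*} [CommRing S]

theorem sub_pow_eq_sum_choose (a b : S) (n : ℕ) :
    (a - b) ^ n = ∑ i ∈ range (n + 1), (n.choose i : S) * (-1) ^ i * a ^ (n - i) * b ^ i := by
  rw [sub_eq_neg_add, add_pow]
  refine sum_congr rfl fun i _ => ?_
  rw [neg_pow]
  ring

theorem one_sub_mul_pow_sub_pow_mul_one_sub_pow (a b : S) (n k : ℕ) :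
    (1 - a * b) ^ n - a ^ k * (1 - b) ^ n =
      ∑ i ∈ range (n + 1), (-1) ^ i * (n.choose i : S) * b ^ i * (a ^ i - a ^ k) := by
  rw [sub_pow_eq_sum_choose, sub_pow_eq_sum_choose, mul_sum, ← sum_sub_distrib]
  refine sum_congr rfl fun i _ => ?_
  ring

end Binomial

theorem one_sub_X_mul_xi (m : ℕ) :
    (1 - X 0) * xi m = (1 - X 0 * X 1) ^ (m + 1) - X 0 ^ m * (1 - X 1) ^ (m + 1) := by
  have hrow : ∀ j ∈ range m, (1 - X 0) * ∑ i ∈ Icc j (m - 1),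
      (-1) ^ j * ((m + 1).choose j : MvPolynomial (Fin 2) ℤ) * X 0 ^ i * X 1 ^ j =
      (-1) ^ j * ((m + 1).choose j : MvPolynomial (Fin 2) ℤ) * X 1 ^ j * (X 0 ^ j - X 0 ^ m) := by
    intro j hj
    have hjm := mem_range.1 hj
    have hIcc : Icc j (m - 1) = Ico j m := by ext i; simp only [mem_Icc, mem_Ico]; omega
    rw [hIcc, ← geom_sum_Ico_mul_neg _ hjm.le, mul_sum, sum_mul, mul_sum]
    exact sum_congr rfl fun i _ => by ring
  rw [one_sub_mul_pow_sub_pow_mul_one_sub_pow, sum_range_succ, sum_range_succ, xi, mul_add,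
    mul_sum, sum_congr rfl hrow, Nat.choose_self, Nat.cast_one]
  ring

theorem one_sub_X_ne_zero : (1 - X 0 : MvPolynomial (Fin 2) ℤ) ≠ 0 := fun h => by
  simpa using congrArg constantCoeff h

theorem xi_succ_eq_one_sub_mul_add (m : ℕ) :
    xi (m + 1) = (1 - X 0 * X 1) * xi m + X 0 ^ m * (1 - X 1) ^ (m + 1) :=
  mul_left_cancel₀ one_sub_X_ne_zero <| by
    linear_combination one_sub_X_mul_xi (m + 1) - (1 - X 0 * X 1) * one_sub_X_mul_xi m

theorem xi_succ_eq_mul_add (m : ℕ) :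
    xi (m + 1) = X 0 * (1 - X 1) * xi m + (1 - X 0 * X 1) ^ (m + 1) := by
  linear_combination xi_succ_eq_one_sub_mul_add m + one_sub_X_mul_xi m

theorem constantCoeff_xi_succ (m : ℕ) : constantCoeff (xi (m + 1)) = 1 := by
  simpa using congrArg constantCoeff (one_sub_X_mul_xi (m + 1))

section Mapped

variable {R : Type*} [CommRing R] (f : ℤ →+* R)

theorem map_xi_succ_eq_one_sub_mul_add (m : ℕ) :
    map f (xi (m + 1)) = (1 - X 0 * X 1) * map f (xi m) + X 0 ^ m * (1 - X 1) ^ (m + 1) := by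
  simpa using congrArg (map f) (xi_succ_eq_one_sub_mul_add m)

theorem map_xi_succ_eq_mul_add (m : ℕ) :
    map f (xi (m + 1)) = X 0 * (1 - X 1) * map f (xi m) + (1 - X 0 * X 1) ^ (m + 1) := by
  simpa using congrArg (map f) (xi_succ_eq_mul_add m)

theorem one_sub_X_one_mem_span :
    (1 - X 1 : MvPolynomial (Fin 2) R) ∈ Ideal.span {X 0 - 1, X 1 - 1} :=
  Ideal.mem_span_pair.2 ⟨0, -1, by ring⟩

theorem one_sub_X_mul_X_mem_span :
    (1 - X 0 * X 1 : MvPolynomial (Fin 2) R) ∈ Ideal.span {X 0 - 1, X 1 - 1} :=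
  Ideal.mem_span_pair.2 ⟨-1, -X 0, by ring⟩

theorem map_xi_mem_span_pow (n : ℕ) :
    map f (xi n) ∈ (Ideal.span {X 0 - 1, X 1 - 1} : Ideal (MvPolynomial (Fin 2) R)) ^ n := by
  induction n with
  | zero => simp
  | succ n ih =>
    rw [map_xi_succ_eq_one_sub_mul_add, mul_comm]
    exact add_mem (SetLike.mul_mem_graded ih (by simpa using one_sub_X_mul_X_mem_span))
      (Ideal.mul_mem_left _ _ (Ideal.pow_mem_pow one_sub_X_one_mem_span _))

end Mapped

section PowersOfIdeal

variable {S : Type*} [CommRing S] {I : Ideal S}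

theorem pow_sub_mul_pow_mem_pow {a b : S} (ha : a ∈ I) (hb : b ∈ I) {i k : ℕ} (hik : i ≤ k) :
    a ^ (k - i) * b ^ i ∈ I ^ k := by
  simpa [Nat.sub_add_cancel hik] using
    SetLike.mul_mem_graded (Ideal.pow_mem_pow ha (k - i)) (Ideal.pow_mem_pow hb i)

theorem pow_sub_sum_choose_mem_pow {p : ℕ} [Fact p.Prime] [CharP S p] {m k l : ℕ}
    (hkl : (m + 1) * k + l = p) {A B u e : S} (hB : B ∈ I ^ m) (hu : u ∈ I) (he : e ∈ I)
    (hA : A = u * B + e ^ (m + 1)) (hAe : A - e * B ∈ I ^ (m + 1))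
    {s : Finset ℕ} (hs : s ⊆ range (k + 1)) :
    A ^ p - ∑ i ∈ s, (k.choose i : S) * (-1) ^ i * A ^ (k - i) * (u * B) ^ i * e ^ l * B ^ p ∈
      I ^ (p * (m + 1)) := by
  set T : ℕ → S := fun i =>
    (k.choose i : S) * (-1) ^ i * A ^ (k - i) * (u * B) ^ i * e ^ l * B ^ p
  have huB : u * B ∈ I ^ (m + 1) := by simpa [pow_succ'] using Ideal.mul_mem_mul hu hB
  have hA_mem : A ∈ I ^ (m + 1) := hA ▸ add_mem huB (Ideal.pow_mem_pow he _)
  have hT : ∀ i ∈ range (k + 1), T i ∈ I ^ (p * (m + 1)) := by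
    intro i hi
    have hAu : A ^ (k - i) * (u * B) ^ i ∈ I ^ ((m + 1) * k) := by
      rw [pow_mul]
      exact pow_sub_mul_pow_mem_pow hA_mem huB (Nat.lt_succ_iff.1 (mem_range.1 hi))
    have hBp : B ^ p ∈ I ^ (m * p) := pow_mul I m p ▸ Ideal.pow_mem_pow hB p
    have hexp : (m + 1) * k + l + m * p = p * (m + 1) := by rw [← hkl]; ring
    have hmem := SetLike.mul_mem_graded (SetLike.mul_mem_graded hAu (Ideal.pow_mem_pow he l)) hBp
    rw [hexp] at hmem
    simpa only [T, mul_assoc] using Ideal.mul_mem_left _ ((k.choose i : S) * (-1) ^ i) hmem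
  have hfull : ∑ i ∈ range (k + 1), T i = (e * B) ^ p := by
    have hAu : A - u * B = e ^ (m + 1) := by rw [hA]; ring
    rw [← sum_mul, ← sum_mul, ← sub_pow_eq_sum_choose, hAu, ← pow_mul, ← pow_add, hkl, mul_pow]
  have hsplit : A ^ p - ∑ i ∈ s, T i = (A - e * B) ^ p + ∑ i ∈ range (k + 1) \ s, T i := by
    rw [sub_pow_char, ← hfull, ← sum_sdiff hs]
    ring
  rw [hsplit]
  exact add_mem (by simpa [mul_comm] using SetLike.pow_mem_graded p hAe)
    (sum_mem fun i hi => hT i (sdiff_subset hi))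

end PowersOfIdeal

theorem stmt_9_general (m : ℕ) (p : ℕ) (hp : p.Prime)
    (j : ℕ) :
    letI k := p / (m + 1)
    letI l := p % (m + 1)
    letI Ξ : ℕ → MvPolynomial (Fin 2) (ZMod p) :=
      fun n => MvPolynomial.map (Int.castRingHom (ZMod p)) (xi n)
    letI ζ : MvPolynomial (Fin 2) (ZMod p) :=
      Ξ (m + 1) ^ p -
        ∑ i ∈ Finset.Icc (j + 1) k,
          (k.choose i : MvPolynomial (Fin 2) (ZMod p)) * (-1) ^ i * Ξ (m + 1) ^ (k - i) *
            (X 0 * (1 - X 1) * Ξ m) ^ i * (1 - X 0 * X 1) ^ l * Ξ m ^ p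
    ζ ∈ (Ideal.span {X 0 - 1, X 1 - 1} : Ideal (MvPolynomial (Fin 2) (ZMod p))) ^ (p * (m + 1)) ∧
      MvPolynomial.coeff 0 ζ = 1 := by
  have : Fact p.Prime := ⟨hp⟩
  refine ⟨pow_sub_sum_choose_mem_pow (Nat.div_add_mod p (m + 1)) (map_xi_mem_span_pow _ m)
    (Ideal.mul_mem_left _ _ one_sub_X_one_mem_span) one_sub_X_mul_X_mem_span
    (map_xi_succ_eq_mul_add _ m) ?_ ?_, ?_⟩
  · rw [map_xi_succ_eq_one_sub_mul_add, add_sub_cancel_left]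
    exact Ideal.mul_mem_left _ _ (Ideal.pow_mem_pow one_sub_X_one_mem_span _)
  · intro i hi
    simp only [mem_Icc, mem_range] at hi ⊢
    omega
  · beta_reduce
    rw [← constantCoeff_eq, map_sub, map_pow, constantCoeff_map, constantCoeff_xi_succ, map_one,
      one_pow, map_sum, sum_eq_zero, sub_zero]
    intro i hi
    have : i ≠ 0 := by simp only [mem_Icc] at hi; omega
    simp [this]

theorem stmt_9 (m : ℕ) (hm : 1 ≤ m) (p : ℕ) (hp : p.Prime)
    (j : ℕ) (hj : j ≤ p / (m + 1)) :
    letI k := p / (m + 1)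
    letI l := p % (m + 1)
    letI Ξ : ℕ → MvPolynomial (Fin 2) (ZMod p) :=
      fun n => MvPolynomial.map (Int.castRingHom (ZMod p)) (xi n)
    letI ζ : MvPolynomial (Fin 2) (ZMod p) :=
      Ξ (m + 1) ^ p -
        ∑ i ∈ Finset.Icc (j + 1) k,
          (k.choose i : MvPolynomial (Fin 2) (ZMod p)) * (-1) ^ i * Ξ (m + 1) ^ (k - i) *
            (X 0 * (1 - X 1) * Ξ m) ^ i * (1 - X 0 * X 1) ^ l * Ξ m ^ p
    ζ ∈ (Ideal.span {X 0 - 1, X 1 - 1} : Ideal (MvPolynomial (Fin 2) (ZMod p))) ^ (p * (m + 1)) ∧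
      MvPolynomial.coeff 0 ζ = 1 :=
  stmt_9_general m p hp j
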